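/- Let G be a connected simple graph, let u be a vertex of G with d_G(u) = 1 and let v be the unique neighbor of u. Let G' = G − u. Let D be an orientation of G and let D' be an orientation of G' that orients every edge of G' in the same direction as D. Then for every real a ≥ 1, R⁰_{a+1}(D) − R⁰_{a+1}(D') ≤ (1/2)·[1 + (d_G(v))^{a+1} − (d_G(v)−1)^{a+1}], with equality if and only if max{d⁺_D(v), d⁻_D(v)} = d_G(v). -/

import Mathlib

/-- An orientation of a simple graph `G`: each edge `{u,v}` is replaced by exactly one
of the arcs `(u,v)` or `(v,u)`. -/
structure SimpleGraph.Orientation {V : Type*} (G : SimpleGraph V) where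
  /-- the arc relation of the orientation -/
  arc : V → V → Prop
  adj_of_arc : ∀ u v, arc u v → G.Adj u v
  arc_total : ∀ u v, G.Adj u v → arc u v ∨ arc v u
  arc_asymm : ∀ u v, arc u v → ¬ arc v u

namespace SimpleGraph.Orientation

variable {V : Type*} {G : SimpleGraph V} (D : G.Orientation)

/-- The out-degree of a vertex in the orientation. -/
noncomputable def outDeg (u : V) : ℕ := Set.ncard {v | D.arc u v}

/-- The in-degree of a vertex in the orientation. -/
noncomputable def inDeg (v : V) : ℕ := Set.ncard {u | D.arc u v}

/-- An orientation is sink-source if every vertex has out-degree 0 or in-degree 0. -/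
def IsSinkSource : Prop := ∀ v : V, D.outDeg v = 0 ∨ D.inDeg v = 0

open scoped Classical in
/-- The zeroth-order general Randić index `R⁰_{a+1}(D)` of an orientation:
`(1/2) ∑_{(u,v) arc} ((d⁺ u)^a + (d⁻ v)^a)`. -/
noncomputable def randic [Fintype V] (a : ℝ) : ℝ :=
  (1 / 2) * ∑ p ∈ Finset.univ.filter (fun p : V × V => D.arc p.1 p.2),
    ((D.outDeg p.1 : ℝ) ^ a + (D.inDeg p.2 : ℝ) ^ a)

end SimpleGraph.Orientation

/-!
Counting every vertex once as a tail and once as a head gives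
`R⁰_{a+1}(D) = ½ ∑ₓ (d⁺(x)^{a+1} + d⁻(x)^{a+1})`. Reversing all arcs preserves the index, so we may
assume the pendant edge is oriented `u → v`. Deleting `u` then removes the term `1^{a+1} + 0^{a+1}`
of `u` and lowers `k = d⁻(v)` by one, so the difference is `½ (1 + k^{a+1} - (k-1)^{a+1})`.
Since `x ↦ x^{a+1} - (x-1)^{a+1}` is strictly increasing on `[1, ∞)` and `1 ≤ k ≤ d_G(v)`, the bound
follows, with equality iff `k = d_G(v)`, i.e. iff `max(d⁺(v), d⁻(v)) = d_G(v)`.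
-/

lemma strictMonoOn_rpow_sub_rpow_sub_one {p : ℝ} (hp : 1 < p) :
    StrictMonoOn (fun x : ℝ => x ^ p - (x - 1) ^ p) (Set.Ici 1) := by
  have hderiv (x : ℝ) : HasDerivAt (fun x : ℝ => x ^ p - (x - 1) ^ p)
      (p * x ^ (p - 1) - 1 * p * (x - 1) ^ (p - 1)) x :=
    (Real.hasDerivAt_rpow_const (Or.inr hp.le)).sub
      (((hasDerivAt_id x).sub_const 1).rpow_const (Or.inr hp.le))
  refine strictMonoOn_of_deriv_pos (convex_Ici 1)
    (fun x _ => (hderiv x).continuousAt.continuousWithinAt) fun x hx => ?_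
  rw [interior_Ici, Set.mem_Ioi] at hx
  have hlt : (x - 1) ^ (p - 1) < x ^ (p - 1) :=
    Real.rpow_lt_rpow (by linarith) (by linarith) (by linarith)
  rw [(hderiv x).deriv]
  nlinarith

namespace SimpleGraph.Orientation

variable {V : Type*} {G : SimpleGraph V}

def reverse (D : G.Orientation) : G.Orientation where
  arc x y := D.arc y x
  adj_of_arc x y h := (D.adj_of_arc y x h).symm
  arc_total x y h := D.arc_total y x h.symm
  arc_asymm x y h := D.arc_asymm y x h

@[simp]
lemma outDeg_reverse (D : G.Orientation) (x : V) : D.reverse.outDeg x = D.inDeg x := rfl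

@[simp]
lemma inDeg_reverse (D : G.Orientation) (x : V) : D.reverse.inDeg x = D.outDeg x := rfl

lemma randic_reverse [Fintype V] (D : G.Orientation) (a : ℝ) :
    D.reverse.randic a = D.randic a := by
  classical
  unfold randic
  congr 1
  refine Finset.sum_equiv (Equiv.prodComm V V)
    (fun _ => by simp only [Finset.mem_filter, Finset.mem_univ, true_and]; rfl) fun _ _ => ?_
  simp only [Equiv.prodComm_apply, Prod.fst_swap, Prod.snd_swap, outDeg_reverse, inDeg_reverse]
  ring

lemma outDeg_add_inDeg [Finite V] (D : G.Orientation) (x : V) :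
    D.outDeg x + D.inDeg x = (G.neighborSet x).ncard := by
  have hunion : {y | D.arc x y} ∪ {y | D.arc y x} = G.neighborSet x := by
    ext y
    exact ⟨fun h => h.elim (D.adj_of_arc x y) fun h => (D.adj_of_arc y x h).symm,
      D.arc_total x y⟩
  have hdisj : Disjoint {y | D.arc x y} {y | D.arc y x} :=
    Set.disjoint_left.mpr fun y => D.arc_asymm x y
  rw [← hunion, Set.ncard_union_eq hdisj, outDeg, inDeg]

lemma outDeg_pos_of_arc [Finite V] (D : G.Orientation) {x y : V} (h : D.arc x y) :
    0 < D.outDeg x :=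
  (Set.ncard_pos).mpr ⟨y, h⟩

lemma inDeg_pos_of_arc [Finite V] (D : G.Orientation) {x y : V} (h : D.arc x y) :
    0 < D.inDeg y :=
  (Set.ncard_pos).mpr ⟨x, h⟩

lemma card_filter_arc_eq_outDeg [Fintype V] (D : G.Orientation) (x : V)
    [DecidablePred (D.arc x)] : (Finset.univ.filter (D.arc x)).card = D.outDeg x := by
  rw [outDeg, ← Set.ncard_coe_finset, Finset.coe_filter_univ]

lemma card_filter_arc_eq_inDeg [Fintype V] (D : G.Orientation) (y : V)
    [DecidablePred (D.arc · y)] : (Finset.univ.filter (D.arc · y)).card = D.inDeg y := by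
  rw [inDeg, ← Set.ncard_coe_finset, Finset.coe_filter_univ]

lemma randic_eq_half_sum_rpow [Fintype V] (D : G.Orientation) {a : ℝ} (ha : a + 1 ≠ 0) :
    D.randic a =
      1 / 2 * ∑ x, ((D.outDeg x : ℝ) ^ (a + 1) + (D.inDeg x : ℝ) ^ (a + 1)) := by
  classical
  have hpow (n : ℕ) : (n : ℝ) * (n : ℝ) ^ a = (n : ℝ) ^ (a + 1) := by
    rw [Real.rpow_add_one' n.cast_nonneg ha, mul_comm]
  unfold randic
  rw [Finset.sum_add_distrib, Finset.sum_add_distrib, Finset.sum_filter, Fintype.sum_prod_type,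
    Finset.sum_filter, Fintype.sum_prod_type, Finset.sum_comm (γ := V) (f := fun x y =>
      if D.arc x y then (D.inDeg y : ℝ) ^ a else 0)]
  congr 2 <;> refine Finset.sum_congr rfl fun x _ => ?_
  · dsimp only
    rw [← Finset.sum_filter, Finset.sum_const, card_filter_arc_eq_outDeg, nsmul_eq_mul, hpow]
  · rw [← Finset.sum_filter, Finset.sum_const, card_filter_arc_eq_inDeg, nsmul_eq_mul, hpow]

lemma arc_iff_arc_and_adj {G' : SimpleGraph V} {D : G.Orientation} {D' : G'.Orientation}
    (hDD' : ∀ x y, D'.arc x y → D.arc x y) (x y : V) :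
    D'.arc x y ↔ D.arc x y ∧ G'.Adj x y := by
  refine ⟨fun h => ⟨hDD' x y h, D'.adj_of_arc x y h⟩, fun ⟨h, hadj⟩ => ?_⟩
  exact (D'.arc_total x y hadj).resolve_right fun h' => D.arc_asymm x y h (hDD' y x h')

section DeleteVertex

variable {G' : SimpleGraph V} {D : G.Orientation} {D' : G'.Orientation} {u : V}
  (hD' : ∀ x y, D'.arc x y ↔ D.arc x y ∧ x ≠ u ∧ y ≠ u)
include hD'

lemma outDeg_eq_zero_of_deleted : D'.outDeg u = 0 := by
  simp [outDeg, hD']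

lemma inDeg_eq_zero_of_deleted : D'.inDeg u = 0 := by
  simp [inDeg, hD']

lemma outDeg_eq_of_not_arc {w : V} (hw : w ≠ u) (h : ¬ D.arc w u) :
    D'.outDeg w = D.outDeg w := by
  unfold outDeg
  congr 1
  ext y
  exact (hD' w y).trans ⟨fun h' => h'.1, fun h' => ⟨h', hw, by rintro rfl; exact h h'⟩⟩

lemma inDeg_eq_of_not_arc {w : V} (hw : w ≠ u) (h : ¬ D.arc u w) :
    D'.inDeg w = D.inDeg w := by
  unfold inDeg
  congr 1
  ext y
  exact (hD' y w).trans ⟨fun h' => h'.1, fun h' => ⟨h', by rintro rfl; exact h h', hw⟩⟩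

lemma inDeg_add_one_of_arc [Finite V] {w : V} (hw : w ≠ u) (h : D.arc u w) :
    D'.inDeg w + 1 = D.inDeg w := by
  have hset : {y | D'.arc y w} = {y | D.arc y w} \ {u} := by
    ext y
    simp [hD', hw]
  rw [inDeg, hset, Set.ncard_sdiff_singleton_add_one (show u ∈ {y | D.arc y w} from h), inDeg]

lemma randic_sub_randic_of_pendant_arc [Fintype V] {v : V} (hnbr : G.neighborSet u = {v})
    (hdeg : (G.neighborSet u).ncard = 1) (harc : D.arc u v) {a : ℝ} (ha : a + 1 ≠ 0) :
    D.randic a - D'.randic a =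
      1 / 2 * (1 + (D.inDeg v : ℝ) ^ (a + 1) - ((D.inDeg v : ℝ) - 1) ^ (a + 1)) := by
  have huv : u ≠ v := G.ne_of_adj (D.adj_of_arc u v harc)
  have hnbr_eq {w : V} (h : G.Adj u w) : w = v := Set.ext_iff.mp hnbr w |>.mp h
  have hout_u : D.outDeg u = 1 := by
    have := D.outDeg_pos_of_arc harc
    have := D.outDeg_add_inDeg u
    omega
  have hin_u : D.inDeg u = 0 := by
    have := D.outDeg_add_inDeg u
    omega
  have hin_v : (D'.inDeg v : ℝ) = D.inDeg v - 1 := by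
    rw [← inDeg_add_one_of_arc hD' huv.symm harc]
    push_cast
    ring
  rw [D.randic_eq_half_sum_rpow ha, D'.randic_eq_half_sum_rpow ha, ← mul_sub,
    ← Finset.sum_sub_distrib, Fintype.sum_eq_add u v huv fun w ⟨hwu, hwv⟩ => ?_,
    outDeg_eq_zero_of_deleted hD', inDeg_eq_zero_of_deleted hD', hout_u, hin_u, hin_v,
    outDeg_eq_of_not_arc hD' huv.symm (D.arc_asymm u v harc)]
  · push_cast
    rw [Real.one_rpow, Real.zero_rpow ha]
    ring
  · rw [outDeg_eq_of_not_arc hD' hwu fun h => hwv (hnbr_eq (D.adj_of_arc w u h).symm),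
      inDeg_eq_of_not_arc hD' hwu fun h => hwv (hnbr_eq (D.adj_of_arc u w h)), sub_self]

end DeleteVertex

end SimpleGraph.Orientation

theorem randic_sub_le_of_delete_pendant_general
    {V : Type*} [Fintype V] (G G' : SimpleGraph V)
    (u v : V) (hdeg : (G.neighborSet u).ncard = 1) (hnbr : G.neighborSet u = {v})
    (hG' : ∀ x y, G'.Adj x y ↔ (G.Adj x y ∧ x ≠ u ∧ y ≠ u))
    (D : G.Orientation) (D' : G'.Orientation)
    (hDD' : ∀ x y, D'.arc x y → D.arc x y)
    (a : ℝ) (ha : 1 ≤ a) :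
    D.randic a - D'.randic a ≤
      (1 / 2) * (1 + ((G.neighborSet v).ncard : ℝ) ^ (a + 1) -
        (((G.neighborSet v).ncard : ℝ) - 1) ^ (a + 1)) ∧
    (D.randic a - D'.randic a =
      (1 / 2) * (1 + ((G.neighborSet v).ncard : ℝ) ^ (a + 1) -
        (((G.neighborSet v).ncard : ℝ) - 1) ^ (a + 1)) ↔
      max (D.outDeg v) (D.inDeg v) = (G.neighborSet v).ncard) := by
  have hadj : G.Adj u v := show v ∈ G.neighborSet u by simp [hnbr]
  wlog harc : D.arc u v generalizing D D'
  · have h := this D.reverse D'.reverse (fun x y => hDD' y x)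
      ((D.arc_total u v hadj).resolve_left harc)
    rwa [D.randic_reverse, D'.randic_reverse, D.outDeg_reverse, D.inDeg_reverse, max_comm] at h
  have hD' (x y : V) : D'.arc x y ↔ D.arc x y ∧ x ≠ u ∧ y ≠ u := by
    rw [SimpleGraph.Orientation.arc_iff_arc_and_adj hDD', hG', ← and_assoc,
      and_iff_left_of_imp (D.adj_of_arc x y)]
  have hin_pos := D.inDeg_pos_of_arc harc
  have hdeg_v := D.outDeg_add_inDeg v
  have hmax : max (D.outDeg v) (D.inDeg v) = (G.neighborSet v).ncard ↔
      D.inDeg v = (G.neighborSet v).ncard := by omega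
  have hk : (1 : ℝ) ≤ D.inDeg v := by exact_mod_cast hin_pos
  have hkd : (D.inDeg v : ℝ) ≤ (G.neighborSet v).ncard := by
    exact_mod_cast hdeg_v ▸ le_add_self
  have hmono := strictMonoOn_rpow_sub_rpow_sub_one (by linarith : (1 : ℝ) < a + 1)
  rw [SimpleGraph.Orientation.randic_sub_randic_of_pendant_arc hD' hnbr hdeg harc (by linarith),
    hmax, ← Nat.cast_inj (R := ℝ), ← hmono.injOn.eq_iff hk (hk.trans hkd)]
  have := hmono.monotoneOn hk (hk.trans hkd) hkd
  constructor
  · linarith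
  · constructor <;> intro <;> linarith

/-- deleting a pendant vertex `u` with neighbor `v` from a connected graph
changes the Randić index of compatible orientations by at most
`(1/2)(1 + d_G(v)^(a+1) - (d_G(v)-1)^(a+1))`, with equality iff
`max(d⁺_D(v), d⁻_D(v)) = d_G(v)`. -/
theorem randic_sub_le_of_delete_pendant
    {V : Type*} [Fintype V] (G G' : SimpleGraph V) (hconn : G.Connected)
    (u v : V) (hdeg : (G.neighborSet u).ncard = 1) (hnbr : G.neighborSet u = {v})
    (hG' : ∀ x y, G'.Adj x y ↔ (G.Adj x y ∧ x ≠ u ∧ y ≠ u))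
    (D : G.Orientation) (D' : G'.Orientation)
    (hDD' : ∀ x y, D'.arc x y → D.arc x y)
    (a : ℝ) (ha : 1 ≤ a) :
    D.randic a - D'.randic a ≤
      (1 / 2) * (1 + ((G.neighborSet v).ncard : ℝ) ^ (a + 1) -
        (((G.neighborSet v).ncard : ℝ) - 1) ^ (a + 1)) ∧
    (D.randic a - D'.randic a =
      (1 / 2) * (1 + ((G.neighborSet v).ncard : ℝ) ^ (a + 1) -
        (((G.neighborSet v).ncard : ℝ) - 1) ^ (a + 1)) ↔
      max (D.outDeg v) (D.inDeg v) = (G.neighborSet v).ncard) :=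
  randic_sub_le_of_delete_pendant_general G G' u v hdeg hnbr hG' D D' hDD' a ha
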